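/- arXiv:2512.14221 — 2 statements merged into one kernel-verified Lean document; each statement's English description precedes it below -/
import Mathlib

section
/- Let (X, M, Y) be a random element of ℝ^d × {0,1}^d × ℝ and let (X̂, Ŷ) be a random element of ℝ^d × ℝ with law Q. Fix m ∈ {0,1}^d with P(M = m) > 0. Let P*_m denote the conditional law of (mask(X, m), Y) given {M = m}, let Q*_m denote the law of (mask(X̂, m), Ŷ), let P_{XY} denote the law of (X, Y), and let P^m_{XY} denote the conditional law of (X, Y) given {M = m} (which is automatically absolutely continuous with respect to P_{XY}). Then 2·d_TV(P*_m, Q*_m) ≤ 2·d_TV(P_{XY}, Q) + E_{(x,y) ∼ P_{XY}}[ | (dP^m_{XY}/dP_{XY})(x,y) − 1 | ]. -/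
open MeasureTheory ProbabilityTheory
open scoped ENNReal

universe u

/-- Measurable space structure on `Option α`, via the identification with `α ⊕ PUnit`. -/
instance optionMeasurableSpace {α : Type u} [MeasurableSpace α] : MeasurableSpace (Option α) :=
  MeasurableSpace.comap (Equiv.optionEquivSumPUnit.{0, u} α) inferInstance

/-- The `β`-quantile of the discrete distribution `∑ i, w i · δ_{v i}` on `ℝ ∪ {+∞}`:
`inf { z ∈ ℝ : ∑_{i : v i ≤ z} w i ≥ β }`, with `inf ∅ = +∞`. -/
noncomputable def wQuantile {ι : Type*} [Fintype ι] (β : ℝ) (w : ι → ℝ) (v : ι → EReal) : EReal :=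
  sInf {z : EReal | ∃ r : ℝ, z = (r : EReal) ∧
    β ≤ ∑ i ∈ Finset.univ.filter (fun i => v i ≤ (r : EReal)), w i}

/-- Total variation distance between two measures. -/
noncomputable def tvDist {Z : Type*} [MeasurableSpace Z] (P Q : Measure Z) : ℝ :=
  ⨆ A : {A : Set Z // MeasurableSet A}, |(P A.1).toReal - (Q A.1).toReal|

/-- The mask operator: coordinate `j` is `NA` (i.e. `none`) if `m j = true`, else `x j`. -/
def maskOp {d : ℕ} (x : Fin d → ℝ) (m : Fin d → Bool) : Fin d → Option ℝ :=
  fun j => if m j then none else some (x j)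

/-- The `β`-quantile of `(∑_{i=1}^n δ_{sc i} + δ_{+∞})/(n+1)`. -/
noncomputable def splitQuantile {n : ℕ} (β : ℝ) (sc : Fin n → ℝ) : EReal :=
  wQuantile β (fun _ : Option (Fin n) => 1 / (n + 1 : ℝ))
    (fun i => i.elim (⊤ : EReal) (fun j => ((sc j : ℝ) : EReal)))

/-! Masking is a measurable map `T` applied to `(X, Y)`, so `P*_m` and `Q*_m` are the push-forwards
of `P^m_XY` and `Q` under `T`. Total variation can only shrink under a push-forward, so
`d_TV(P*_m, Q*_m) ≤ d_TV(P^m_XY, Q) ≤ d_TV(P^m_XY, P_XY) + d_TV(P_XY, Q)`, and the first term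
is at most half the `L¹(P_XY)` norm of `dP^m_XY/dP_XY - 1`. -/

lemma measurable_some {α : Type u} [MeasurableSpace α] :
    Measurable (some : α → Option α) := by
  rintro _ ⟨t, ht, rfl⟩
  exact measurable_inl ht

lemma measurable_maskOp {d : ℕ} (m : Fin d → Bool) : Measurable (maskOp · m) := by
  refine measurable_pi_lambda _ fun j => ?_
  by_cases h : m j
  · simp [maskOp, h]
  · simp only [maskOp, h]
    exact measurable_some.comp (measurable_pi_apply j)

section tvDist

variable {Z : Type*} [MeasurableSpace Z]

lemma tvDist_le_of_forall {P Q : Measure Z} {c : ℝ}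
    (h : ∀ A, MeasurableSet A → |P.real A - Q.real A| ≤ c) : tvDist P Q ≤ c :=
  ciSup_le fun A => h A.1 A.2

variable {P Q R : Measure Z} [IsProbabilityMeasure P] [IsProbabilityMeasure Q]
  [IsProbabilityMeasure R]

lemma abs_measureReal_sub_le_tvDist {A : Set Z} (hA : MeasurableSet A) :
    |P.real A - Q.real A| ≤ tvDist P Q := by
  refine le_ciSup (f := fun A : {A : Set Z // MeasurableSet A} => |P.real A.1 - Q.real A.1|)
    ⟨1, ?_⟩ ⟨A, hA⟩
  rintro _ ⟨B, rfl⟩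
  exact abs_sub_le_of_nonneg_of_le measureReal_nonneg measureReal_le_one
    measureReal_nonneg measureReal_le_one

lemma tvDist_map_le {Z' : Type*} [MeasurableSpace Z'] {T : Z → Z'} (hT : Measurable T) :
    tvDist (P.map T) (Q.map T) ≤ tvDist P Q :=
  tvDist_le_of_forall fun A hA => by
    simpa only [map_measureReal_apply hT hA] using abs_measureReal_sub_le_tvDist (hT hA)

lemma tvDist_triangle : tvDist P R ≤ tvDist P Q + tvDist Q R :=
  tvDist_le_of_forall fun A hA =>
    (abs_sub_le _ (Q.real A) _).trans
      (add_le_add (abs_measureReal_sub_le_tvDist hA) (abs_measureReal_sub_le_tvDist hA))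

lemma setIntegral_toReal_rnDeriv_sub_one (hPQ : P ≪ Q) (A : Set Z) :
    ∫ z in A, ((P.rnDeriv Q z).toReal - 1) ∂Q = P.real A - Q.real A := by
  rw [integral_sub Measure.integrable_toReal_rnDeriv.integrableOn (integrable_const 1),
    Measure.setIntegral_toReal_rnDeriv hPQ, setIntegral_const, smul_eq_mul, mul_one]

/-- The discrepancy `|P A - Q A|` is also the one on `Aᶜ`, and each is at most the integral of
`|dP/dQ - 1|` over its own set. -/
lemma two_mul_abs_measureReal_sub_le_integral (hPQ : P ≪ Q) {A : Set Z} (hA : MeasurableSet A) :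
    2 * |P.real A - Q.real A| ≤ ∫ z, |(P.rnDeriv Q z).toReal - 1| ∂Q := by
  have abs_le_setIntegral :
      ∀ B, |P.real B - Q.real B| ≤ ∫ z in B, |(P.rnDeriv Q z).toReal - 1| ∂Q :=
    fun B => setIntegral_toReal_rnDeriv_sub_one hPQ B ▸ abs_integral_le_integral_abs
  have compl_eq : |P.real Aᶜ - Q.real Aᶜ| = |P.real A - Q.real A| := by
    rw [probReal_compl_eq_one_sub hA, probReal_compl_eq_one_sub hA, ← abs_neg]
    ring_nf
  have hint : Integrable (fun z => |(P.rnDeriv Q z).toReal - 1|) Q :=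
    (Measure.integrable_toReal_rnDeriv.sub (integrable_const 1)).abs
  rw [← integral_add_compl hA hint]
  linarith [abs_le_setIntegral A, compl_eq ▸ abs_le_setIntegral Aᶜ]

lemma two_mul_tvDist_le_integral_abs_rnDeriv_sub_one (hPQ : P ≪ Q) :
    2 * tvDist P Q ≤ ∫ z, |(P.rnDeriv Q z).toReal - 1| ∂Q := by
  rw [← le_div_iff₀' two_pos]
  exact tvDist_le_of_forall fun A hA => by
    rw [le_div_iff₀' two_pos]
    exact two_mul_abs_measureReal_sub_le_integral hPQ hA

end tvDist

theorem masked_tv_decomposition_general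
    (d : ℕ)
    {Ω : Type*} [MeasurableSpace Ω] (μ : Measure Ω) [IsProbabilityMeasure μ]
    (X : Ω → Fin d → ℝ) (M : Ω → Fin d → Bool) (Y : Ω → ℝ)
    (hX : Measurable X) (hY : Measurable Y)
    {Ω' : Type*} [MeasurableSpace Ω'] (ν : Measure Ω') [IsProbabilityMeasure ν]
    (Xh : Ω' → Fin d → ℝ) (Yh : Ω' → ℝ) (hXh : Measurable Xh) (hYh : Measurable Yh)
    (Q : Measure ((Fin d → ℝ) × ℝ)) (hQ : Q = Measure.map (fun x => (Xh x, Yh x)) ν)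
    (m : Fin d → Bool) (hm : μ {x | M x = m} ≠ 0)
    (Pstar : Measure ((Fin d → Option ℝ) × ℝ))
    (hPstar : Pstar = Measure.map (fun x => (maskOp (X x) m, Y x)) (μ[|{x | M x = m}]))
    (Qstar : Measure ((Fin d → Option ℝ) × ℝ))
    (hQstar : Qstar = Measure.map (fun x => (maskOp (Xh x) m, Yh x)) ν)
    (Pxy : Measure ((Fin d → ℝ) × ℝ))
    (hPxy : Pxy = Measure.map (fun x => (X x, Y x)) μ)
    (Pmxy : Measure ((Fin d → ℝ) × ℝ))
    (hPmxy : Pmxy = Measure.map (fun x => (X x, Y x)) (μ[|{x | M x = m}])) :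
    2 * tvDist Pstar Qstar ≤
      2 * tvDist Pxy Q + ∫ z, |(Pmxy.rnDeriv Pxy z).toReal - 1| ∂Pxy := by
  have hXY : Measurable fun x => (X x, Y x) := hX.prodMk hY
  have hXYh : Measurable fun x => (Xh x, Yh x) := hXh.prodMk hYh
  have : IsProbabilityMeasure (μ[|{x | M x = m}]) := cond_isProbabilityMeasure hm
  have : IsProbabilityMeasure Pxy := hPxy ▸ Measure.isProbabilityMeasure_map hXY.aemeasurable
  have : IsProbabilityMeasure Pmxy := hPmxy ▸ Measure.isProbabilityMeasure_map hXY.aemeasurable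
  have : IsProbabilityMeasure Q := hQ ▸ Measure.isProbabilityMeasure_map hXYh.aemeasurable
  let T : (Fin d → ℝ) × ℝ → (Fin d → Option ℝ) × ℝ := fun p => (maskOp p.1 m, p.2)
  have hT : Measurable T := ((measurable_maskOp m).comp measurable_fst).prodMk measurable_snd
  have hPstar_map : Pstar = Pmxy.map T := by rw [hPstar, hPmxy, Measure.map_map hT hXY]; rfl
  have hQstar_map : Qstar = Q.map T := by rw [hQstar, hQ, Measure.map_map hT hXYh]; rfl
  have hPmxy_ac : Pmxy ≪ Pxy := hPmxy ▸ hPxy ▸ cond_absolutelyContinuous.map hXY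
  calc 2 * tvDist Pstar Qstar ≤ 2 * (tvDist Pmxy Pxy + tvDist Pxy Q) := by
        rw [hPstar_map, hQstar_map]
        gcongr
        exact (tvDist_map_le hT).trans tvDist_triangle
    _ ≤ _ := by linarith [two_mul_tvDist_le_integral_abs_rnDeriv_sub_one hPmxy_ac]

/-- Decomposition of the masked total-variation gap:
`2 d_TV(P*_m, Q*_m) ≤ 2 d_TV(P_XY, Q) + E_{P_XY}|dP^m_XY/dP_XY − 1|`, where `P*_m` is the
conditional law of `(mask(X,m), Y)` given `{M = m}`, `Q*_m` the law of `(mask(X̂,m), Ŷ)`,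
`P_XY` the law of `(X, Y)` and `P^m_XY` its conditional version given `{M = m}`. -/
theorem masked_tv_decomposition
    (d : ℕ) (hd : 1 ≤ d)
    {Ω : Type*} [MeasurableSpace Ω] (μ : Measure Ω) [IsProbabilityMeasure μ]
    (X : Ω → Fin d → ℝ) (M : Ω → Fin d → Bool) (Y : Ω → ℝ)
    (hX : Measurable X) (hM : Measurable M) (hY : Measurable Y)
    {Ω' : Type*} [MeasurableSpace Ω'] (ν : Measure Ω') [IsProbabilityMeasure ν]
    (Xh : Ω' → Fin d → ℝ) (Yh : Ω' → ℝ) (hXh : Measurable Xh) (hYh : Measurable Yh)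
    (Q : Measure ((Fin d → ℝ) × ℝ)) (hQ : Q = Measure.map (fun x => (Xh x, Yh x)) ν)
    (m : Fin d → Bool) (hm : μ {x | M x = m} ≠ 0)
    (Pstar : Measure ((Fin d → Option ℝ) × ℝ))
    (hPstar : Pstar = Measure.map (fun x => (maskOp (X x) m, Y x)) (μ[|{x | M x = m}]))
    (Qstar : Measure ((Fin d → Option ℝ) × ℝ))
    (hQstar : Qstar = Measure.map (fun x => (maskOp (Xh x) m, Yh x)) ν)
    (Pxy : Measure ((Fin d → ℝ) × ℝ))
    (hPxy : Pxy = Measure.map (fun x => (X x, Y x)) μ)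
    (Pmxy : Measure ((Fin d → ℝ) × ℝ))
    (hPmxy : Pmxy = Measure.map (fun x => (X x, Y x)) (μ[|{x | M x = m}])) :
    2 * tvDist Pstar Qstar ≤
      2 * tvDist Pxy Q + ∫ z, |(Pmxy.rnDeriv Pxy z).toReal - 1| ∂Pxy :=
  masked_tv_decomposition_general d μ X M Y hX hY ν Xh Yh hXh hYh Q hQ m hm Pstar hPstar Qstar
    hQstar Pxy hPxy Pmxy hPmxy
end

section
/- Let (Z, 𝒵) be a measurable space, let Q and P be probability measures on Z, let ω̃ : Z → [0,∞) be measurable with ∫ ω̃ dQ = 1, and let P̃ be the probability measure with density ω̃ with respect to Q. On a common probability space, let Z^1, …, Z^n be i.i.d. with law Q and let Z^{n+1} have law P, with Z^1, …, Z^{n+1} mutually independent. Let V : Z → ℝ be measurable and α ∈ (0,1). Define the weights p_i := ω̃(Z^i) / (Σ_{j=1}^n ω̃(Z^j) + ω̃(Z^{n+1})) for i = 1, …, n+1 (with the convention that the weighted quantile below is +∞ when the denominator is 0). Then P( V(Z^{n+1}) ≤ Quantile_{1−α}( Σ_{i=1}^n p_i δ_{V(Z^i)} + p_{n+1} δ_{+∞}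 ) ) ≥ 1 − α − d_TV(P̃, P). -/
open MeasureTheory ProbabilityTheory
open scoped ENNReal

universe u

/-!
Let `P̃ = ω̃ • Q`. Under `P̃ ⊗ Qⁿ` (test point drawn from `P̃`) the sample has the law of
`Q^{n+1}` reweighted by `ω̃(Z^{n+1})`. Replacing the atom at `+∞` by the test point's own score
does not change whether that score is covered, and turns the quantile into a symmetric function
of the sample. By exchangeability of `Q^{n+1}`, the reweighted miscoverage probability is the
average over `i` of `𝔼[ω̃(Zⁱ) 1{Zⁱ is missed}]`, and the missed points carry at most an `α`
fraction of the total weight `∑ ω̃(Zⁱ)`, whose mean is `n + 1`; so coverage is at least `1 - α`.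
Finally, coverage is the integral over the test point of a `[0, 1]`-valued function, which moves
by at most `d_TV(P̃, P)` when `P̃` is replaced by `P`.
-/

section WeightedQuantile

variable {ι : Type*} [Fintype ι] {β : ℝ} {w : ι → ℝ} {v : ι → EReal}

noncomputable def weightBelow (w : ι → ℝ) (v : ι → EReal) (z : EReal) : ℝ :=
  ∑ i ∈ Finset.univ.filter (fun i => v i ≤ z), w i

lemma wQuantile_eq_sInf_weightBelow (β : ℝ) (w : ι → ℝ) (v : ι → EReal) :
    wQuantile β w v = sInf {z : EReal | ∃ r : ℝ, z = r ∧ β ≤ weightBelow w v r} :=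
  rfl

lemma weightBelow_mono (hw : ∀ i, 0 ≤ w i) : Monotone (weightBelow w v) :=
  fun _ _ hz => Finset.sum_le_sum_of_subset_of_nonneg
    (Finset.monotone_filter_right _ fun _ _ hi => hi.trans hz) fun i _ _ => hw i

lemma wQuantile_le {r : ℝ} (h : β ≤ weightBelow w v r) : wQuantile β w v ≤ r :=
  sInf_le ⟨r, rfl, h⟩

lemma exists_lt_of_wQuantile_lt {z : EReal} (h : wQuantile β w v < z) :
    ∃ r : ℝ, (r : EReal) < z ∧ β ≤ weightBelow w v r := by
  obtain ⟨_, ⟨r, rfl, hr⟩, hrz⟩ := sInf_lt_iff.1 h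
  exact ⟨r, hrz, hr⟩

lemma wQuantile_eq_iInf_rat (hw : ∀ i, 0 ≤ w i) :
    wQuantile β w v = ⨅ q : ℚ, if β ≤ weightBelow w v (q : ℝ) then ((q : ℝ) : EReal) else ⊤ := by
  refine le_antisymm (le_iInf fun q => ?_) (le_sInf ?_)
  · split_ifs with h
    exacts [wQuantile_le h, le_top]
  · rintro _ ⟨r, rfl, hr⟩
    refine le_of_forall_gt_imp_ge_of_dense fun c hc => ?_
    induction c with
    | bot => exact absurd hc not_lt_bot
    | top => exact le_top
    | coe x =>
      obtain ⟨q, hrq, hqx⟩ := exists_rat_btwn (EReal.coe_lt_coe_iff.1 hc)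
      refine (iInf_le _ q).trans ?_
      rw [if_pos (hr.trans (weightBelow_mono hw (EReal.coe_le_coe_iff.2 hrq.le)))]
      exact EReal.coe_le_coe_iff.2 hqx.le

lemma measurable_wQuantile {δ : Type*} [MeasurableSpace δ] {W : δ → ι → ℝ} {U : δ → ι → EReal}
    (hW : ∀ i, Measurable fun x => W x i) (hW0 : ∀ x i, 0 ≤ W x i)
    (hU : ∀ i, Measurable fun x => U x i) :
    Measurable fun x => wQuantile β (W x) (U x) := by
  simp_rw [wQuantile_eq_iInf_rat (hW0 _)]
  refine Measurable.iInf fun q => Measurable.ite ?_ measurable_const measurable_const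
  simp_rw [weightBelow, Finset.sum_filter]
  exact measurableSet_le measurable_const <| Finset.measurable_sum _ fun i _ =>
    Measurable.ite (measurableSet_le (hU i) measurable_const) (hW i) measurable_const

lemma wQuantile_comp_perm (σ : Equiv.Perm ι) : wQuantile β (w ∘ σ) (v ∘ σ) = wQuantile β w v := by
  have h : weightBelow (w ∘ σ) (v ∘ σ) = weightBelow w v := by
    funext z
    simp only [weightBelow, Finset.sum_filter]
    exact Fintype.sum_equiv σ _ _ fun _ => rfl
  rw [wQuantile_eq_sInf_weightBelow, h, wQuantile_eq_sInf_weightBelow]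

lemma coe_le_wQuantile_update_top_iff [DecidableEq ι] (hw : ∀ i, 0 ≤ w i) {i₀ : ι} {s : ℝ}
    (hs : v i₀ = s) :
    (s : EReal) ≤ wQuantile β w (Function.update v i₀ ⊤) ↔ (s : EReal) ≤ wQuantile β w v := by
  have h_le : ∀ z, weightBelow w (Function.update v i₀ ⊤) z ≤ weightBelow w v z := by
    intro z
    refine Finset.sum_le_sum_of_subset_of_nonneg (Finset.monotone_filter_right _ ?_)
      fun i _ _ => hw i
    intro i _ hi
    rcases eq_or_ne i i₀ with rfl | hne
    · simp_all
    · rwa [Function.update_of_ne hne] at hi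
  have h_eq : ∀ r : ℝ, r < s → weightBelow w (Function.update v i₀ ⊤) r = weightBelow w v r := by
    intro r hrs
    refine Finset.sum_congr (Finset.filter_congr fun i _ => ?_) fun _ _ => rfl
    rcases eq_or_ne i i₀ with rfl | hne
    · simp [hs, hrs]
    · rw [Function.update_of_ne hne]
  constructor
  · intro h
    by_contra! hlt
    obtain ⟨r, hrs, hr⟩ := exists_lt_of_wQuantile_lt hlt
    have hrs' : r < s := EReal.coe_lt_coe_iff.1 hrs
    exact (h.trans (wQuantile_le ((h_eq r hrs').symm ▸ hr))).not_gt hrs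
  · intro h
    refine h.trans (le_sInf ?_)
    rintro _ ⟨r, rfl, hr⟩
    exact wQuantile_le (hr.trans (h_le r))

lemma le_weightBelow_wQuantile (hw : ∀ i, 0 ≤ w i) (x : ι → ℝ) (hβ : β ≤ ∑ i, w i) :
    β ≤ weightBelow w (fun i => x i) (wQuantile β w fun i => x i) := by
  set q := wQuantile β w fun i => (x i : EReal)
  by_cases hB : (Finset.univ.filter fun i => ¬ (x i : EReal) ≤ q).Nonempty
  · obtain ⟨i₀, hi₀, hmin⟩ := Finset.exists_min_image _ x hB
    obtain ⟨r, hri₀, hr⟩ := exists_lt_of_wQuantile_lt (not_le.1 (Finset.mem_filter.1 hi₀).2)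
    refine hr.trans (Finset.sum_le_sum_of_subset_of_nonneg ?_ fun i _ _ => hw i)
    refine Finset.monotone_filter_right _ fun i _ hir => ?_
    by_contra hiq
    have : x i₀ ≤ x i := hmin i (Finset.mem_filter.2 ⟨Finset.mem_univ i, hiq⟩)
    have : x i ≤ r := EReal.coe_le_coe_iff.1 hir
    have : r < x i₀ := EReal.coe_lt_coe_iff.1 hri₀
    linarith
  · rw [Finset.not_nonempty_iff_eq_empty, Finset.filter_eq_empty_iff] at hB
    simp only [not_not] at hB
    rwa [weightBelow, Finset.filter_true_of_mem hB]

lemma sum_filter_not_le_wQuantile_le {α : ℝ} (hα : 0 ≤ α) (hw : ∀ i, 0 ≤ w i) (x : ι → ℝ) :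
    ∑ i ∈ Finset.univ.filter
        (fun i => ¬ (x i : EReal) ≤ wQuantile (1 - α) (fun j => w j / ∑ k, w k) fun j => x j),
        w i ≤ α * ∑ i, w i := by
  rcases (Finset.sum_nonneg fun i _ => hw i : 0 ≤ ∑ i, w i).eq_or_lt with hW | hW
  · rw [← hW, mul_zero]
    exact (Finset.sum_eq_zero fun i _ =>
      (Finset.sum_eq_zero_iff_of_nonneg fun i _ => hw i).1 hW.symm i (Finset.mem_univ i)).le
  · have hcov := le_weightBelow_wQuantile (β := 1 - α) (fun i => div_nonneg (hw i) hW.le) x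
      (by rw [← Finset.sum_div, div_self hW.ne']; linarith)
    rw [weightBelow, ← Finset.sum_div, le_div_iff₀ hW] at hcov
    have hsplit := Finset.sum_filter_add_sum_filter_not Finset.univ
      (fun i => (x i : EReal) ≤ wQuantile (1 - α) (fun j => w j / ∑ k, w k) fun j => x j) w
    linarith

end WeightedQuantile

section TotalVariation

variable {Z : Type*} [MeasurableSpace Z] {P₁ P₂ : Measure Z}

lemma tvDist_nonneg : 0 ≤ tvDist P₁ P₂ :=
  Real.iSup_nonneg fun _ => abs_nonneg _

variable [IsFiniteMeasure P₁] [IsFiniteMeasure P₂]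

lemma bddAbove_range_abs_sub_measure :
    BddAbove (Set.range fun A : {A : Set Z // MeasurableSet A} =>
      |(P₁ A.1).toReal - (P₂ A.1).toReal|) := by
  refine ⟨(P₁ Set.univ).toReal + (P₂ Set.univ).toReal, ?_⟩
  rintro _ ⟨⟨A, -⟩, rfl⟩
  refine (abs_sub _ _).trans (add_le_add ?_ ?_) <;>
    rw [abs_of_nonneg ENNReal.toReal_nonneg] <;>
    exact ENNReal.toReal_mono (measure_ne_top _ _) (measure_mono (Set.subset_univ _))

lemma le_tvDist {A : Set Z} (hA : MeasurableSet A) :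
    |(P₁ A).toReal - (P₂ A).toReal| ≤ tvDist P₁ P₂ :=
  le_ciSup (f := fun A : {A : Set Z // MeasurableSet A} => |(P₁ A.1).toReal - (P₂ A.1).toReal|)
    bddAbove_range_abs_sub_measure ⟨A, hA⟩

lemma measure_le_add_tvDist {A : Set Z} (hA : MeasurableSet A) :
    P₁ A ≤ P₂ A + ENNReal.ofReal (tvDist P₁ P₂) := by
  have h : (P₁ A).toReal ≤ (P₂ A).toReal + tvDist P₁ P₂ := by
    linarith [(le_abs_self _).trans (le_tvDist (P₁ := P₁) (P₂ := P₂) hA)]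
  rw [← ENNReal.ofReal_toReal (measure_ne_top P₁ A), ← ENNReal.ofReal_toReal (measure_ne_top P₂ A)]
  exact (ENNReal.ofReal_le_ofReal h).trans ENNReal.ofReal_add_le

/-- Layer cake: `∫⁻ g = ∫₀¹ P {g > t} dt`, and each level set changes by at most the distance. -/
lemma lintegral_le_lintegral_add_tvDist {g : Z → ℝ≥0∞} (hg : Measurable g) (hg1 : ∀ z, g z ≤ 1) :
    ∫⁻ z, g z ∂P₁ ≤ ∫⁻ z, g z ∂P₂ + ENNReal.ofReal (tvDist P₁ P₂) := by
  set f : Z → ℝ := fun z => (g z).toReal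
  have hgf : ∀ z, g z = ENNReal.ofReal (f z) := fun z =>
    (ENNReal.ofReal_toReal (ne_top_of_le_ne_top ENNReal.one_ne_top (hg1 z))).symm
  have hf1 : ∀ z, f z ≤ 1 := fun z =>
    ENNReal.toReal_le_of_le_ofReal zero_le_one (by simpa using hg1 z)
  have hlevel : ∀ t ∈ Set.Ioi (0 : ℝ), P₁ {z | t < f z}
      ≤ P₂ {z | t < f z} + (Set.Iic 1).indicator (fun _ => ENNReal.ofReal (tvDist P₁ P₂)) t := by
    intro t _
    by_cases ht : t ≤ 1
    · rw [Set.indicator_of_mem (Set.mem_Iic.2 ht)]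
      exact measure_le_add_tvDist (measurableSet_lt measurable_const hg.ennreal_toReal)
    · have : {z | t < f z} = ∅ := Set.eq_empty_of_forall_notMem fun z hz =>
        ht ((le_of_lt hz).trans (hf1 z))
      simp [this]
  simp_rw [hgf]
  rw [lintegral_eq_lintegral_meas_lt _ (.of_forall fun _ => ENNReal.toReal_nonneg)
      hg.ennreal_toReal.aemeasurable,
    lintegral_eq_lintegral_meas_lt _ (.of_forall fun _ => ENNReal.toReal_nonneg)
      hg.ennreal_toReal.aemeasurable]
  calc ∫⁻ t in Set.Ioi 0, P₁ {z | t < f z}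
      ≤ ∫⁻ t in Set.Ioi 0, (P₂ {z | t < f z}
          + (Set.Iic 1).indicator (fun _ => ENNReal.ofReal (tvDist P₁ P₂)) t) :=
        setLIntegral_mono' measurableSet_Ioi hlevel
    _ = (∫⁻ t in Set.Ioi 0, P₂ {z | t < f z}) + ENNReal.ofReal (tvDist P₁ P₂) := by
        rw [lintegral_add_right _ (measurable_const.indicator measurableSet_Iic),
          lintegral_indicator_const measurableSet_Iic, Measure.restrict_apply measurableSet_Iic,
          Set.Iic_inter_Ioi, Real.volume_Ioc, sub_zero, ENNReal.ofReal_one, mul_one]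

lemma prod_apply_le_add_tvDist {Y : Type*} [MeasurableSpace Y] (R : Measure Y)
    [IsProbabilityMeasure R] {S : Set (Z × Y)} (hS : MeasurableSet S) :
    (P₁.prod R) S ≤ (P₂.prod R) S + ENNReal.ofReal (tvDist P₁ P₂) := by
  rw [Measure.prod_apply hS, Measure.prod_apply hS]
  exact lintegral_le_lintegral_add_tvDist (measurable_measure_prodMk_left hS) fun _ => prob_le_one

end TotalVariation

section WeightedScoreQuantile

variable {Z ι : Type*} [Fintype ι] {w V : Z → ℝ} {α : ℝ}

noncomputable def weightedScoreQuantile (w V : Z → ℝ) (α : ℝ) (y : ι → Z) : EReal :=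
  wQuantile (1 - α) (fun i => w (y i) / ∑ j, w (y j)) fun i => (V (y i) : EReal)

lemma weightedScoreQuantile_comp_perm (σ : Equiv.Perm ι) (y : ι → Z) :
    weightedScoreQuantile w V α (y ∘ σ) = weightedScoreQuantile w V α y := by
  have hsum : ∑ j, w ((y ∘ σ) j) = ∑ j, w (y j) := Equiv.sum_comp σ fun j => w (y j)
  simp only [weightedScoreQuantile, hsum]
  exact wQuantile_comp_perm (w := fun i => w (y i) / ∑ j, w (y j))
    (v := fun i => (V (y i) : EReal)) σ

noncomputable def missedWeight (w V : Z → ℝ) (α : ℝ) (y : ι → Z) (i : ι) : ℝ≥0∞ :=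
  {y : ι → Z | ¬ (V (y i) : EReal) ≤ weightedScoreQuantile w V α y}.indicator
    (fun y => ENNReal.ofReal (w (y i))) y

lemma sum_missedWeight_le (hw0 : ∀ z, 0 ≤ w z) (hα : 0 ≤ α) (y : ι → Z) :
    ∑ i, missedWeight w V α y i ≤ ENNReal.ofReal α * ∑ i, ENNReal.ofReal (w (y i)) := by
  have h := sum_filter_not_le_wQuantile_le (w := fun i => w (y i)) hα (fun i => hw0 _)
    fun i => V (y i)
  rw [← ENNReal.ofReal_sum_of_nonneg fun i _ => hw0 _, ← ENNReal.ofReal_mul hα]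
  refine le_of_eq_of_le ?_ (ENNReal.ofReal_le_ofReal h)
  rw [ENNReal.ofReal_sum_of_nonneg fun i _ => hw0 _, Finset.sum_filter]
  refine Finset.sum_congr rfl fun i _ => ?_
  simp only [missedWeight, Set.indicator, Set.mem_ofPred_eq, weightedScoreQuantile]
  split_ifs <;> simp_all

lemma missedWeight_comp_perm (σ : Equiv.Perm ι) (y : ι → Z) (i : ι) :
    missedWeight w V α (y ∘ σ) i = missedWeight w V α y (σ i) := by
  simp only [missedWeight, Set.indicator, Set.mem_ofPred_eq, weightedScoreQuantile_comp_perm,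
    Function.comp_apply]

lemma coe_le_wQuantile_ite_top_iff (hw0 : ∀ z, 0 ≤ w z) {n : ℕ} (y : Fin (n + 1) → Z) :
    (V (y (Fin.last n)) : EReal) ≤ wQuantile (1 - α) (fun i => w (y i) / ∑ j, w (y j))
        (fun i => if (i : ℕ) < n then (V (y i) : EReal) else ⊤)
      ↔ (V (y (Fin.last n)) : EReal) ≤ weightedScoreQuantile w V α y := by
  have hupdate : (fun i : Fin (n + 1) => if (i : ℕ) < n then (V (y i) : EReal) else ⊤)
      = Function.update (fun i => (V (y i) : EReal)) (Fin.last n) ⊤ := by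
    funext i
    rcases Fin.eq_castSucc_or_eq_last i with ⟨j, rfl⟩ | rfl
    · simp [(Fin.castSucc_lt_last j).ne]
    · simp
  rw [hupdate]
  exact coe_le_wQuantile_update_top_iff (fun _ => div_nonneg (hw0 _)
    (Finset.sum_nonneg fun _ _ => hw0 _)) rfl

variable [MeasurableSpace Z]

lemma measurable_weightedScoreQuantile (hw : Measurable w) (hw0 : ∀ z, 0 ≤ w z)
    (hV : Measurable V) : Measurable (weightedScoreQuantile (ι := ι) w V α) := by
  unfold weightedScoreQuantile
  refine measurable_wQuantile (fun i => ?_) (fun _ _ => ?_) fun i => ?_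
  · exact (hw.comp (measurable_pi_apply i)).div
      (Finset.measurable_sum _ fun j _ => hw.comp (measurable_pi_apply j))
  · exact div_nonneg (hw0 _) (Finset.sum_nonneg fun _ _ => hw0 _)
  · exact measurable_coe_real_ereal.comp (hV.comp (measurable_pi_apply i))

lemma measurableSet_setOf_le_weightedScoreQuantile (hw : Measurable w) (hw0 : ∀ z, 0 ≤ w z)
    (hV : Measurable V) (i : ι) :
    MeasurableSet {y : ι → Z | (V (y i) : EReal) ≤ weightedScoreQuantile w V α y} :=
  measurableSet_le (measurable_coe_real_ereal.comp (hV.comp (measurable_pi_apply i)))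
    (measurable_weightedScoreQuantile hw hw0 hV)

lemma lintegral_pi_apply_eq_of_comp_perm (Q : Measure Z) [SigmaFinite Q]
    {F : (ι → Z) → ι → ℝ≥0∞} (hF : ∀ (σ : Equiv.Perm ι) y i, F (y ∘ σ) i = F y (σ i))
    (i j : ι) :
    ∫⁻ y, F y i ∂Measure.pi (fun _ => Q) = ∫⁻ y, F y j ∂Measure.pi (fun _ => Q) := by
  classical
  have hσ := measurePreserving_arrowCongr' (fun _ => Q) (fun _ => Q) (Equiv.swap i j).symm
    (MeasurableEquiv.refl Z) fun _ => MeasurePreserving.id Q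
  rw [← hσ.lintegral_comp_emb (MeasurableEquiv.measurableEmbedding _)]
  refine lintegral_congr fun y => ?_
  simp only [MeasurableEquiv.arrowCongr', Equiv.arrowCongr', Equiv.arrowCongr,
    MeasurableEquiv.coe_mk, Equiv.coe_fn_mk, Equiv.symm_symm]
  exact (hF _ y i).trans (by rw [Equiv.swap_apply_left])

/-- By exchangeability the expected missed weight is the same at every point, hence at most
`α * 𝔼 (∑ j, w (y j)) / card ι = α`. -/
lemma withDensity_pi_setOf_not_le_weightedScoreQuantile_le (Q : Measure Z)
    [IsProbabilityMeasure Q] (hw : Measurable w) (hw0 : ∀ z, 0 ≤ w z)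
    (hw1 : ∫⁻ z, ENNReal.ofReal (w z) ∂Q = 1) (hV : Measurable V) (hα : 0 ≤ α) (i : ι) :
    ((Measure.pi fun _ : ι => Q).withDensity fun y => ENNReal.ofReal (w (y i)))
      {y | (V (y i) : EReal) ≤ weightedScoreQuantile w V α y}ᶜ ≤ ENNReal.ofReal α := by
  set Qι := Measure.pi fun _ : ι => Q
  have hmeas : ∀ j, Measurable fun y : ι → Z => missedWeight w V α y j := fun j =>
    (hw.comp (measurable_pi_apply j)).ennreal_ofReal.indicator
      (measurableSet_setOf_le_weightedScoreQuantile hw hw0 hV j).compl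
  have hcard : (Fintype.card ι : ℝ≥0∞) ≠ 0 := Nat.cast_ne_zero.2 (Fintype.card_pos_iff.2 ⟨i⟩).ne'
  rw [withDensity_apply _ (measurableSet_setOf_le_weightedScoreQuantile hw hw0 hV i).compl,
    ← lintegral_indicator (measurableSet_setOf_le_weightedScoreQuantile hw hw0 hV i).compl,
    ← ENNReal.mul_le_mul_iff_right hcard (ENNReal.natCast_ne_top _)]
  calc (Fintype.card ι : ℝ≥0∞) * ∫⁻ y, missedWeight w V α y i ∂Qι
      = ∑ j, ∫⁻ y, missedWeight w V α y j ∂Qι := by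
        rw [Finset.sum_congr rfl fun j _ => lintegral_pi_apply_eq_of_comp_perm Q
          missedWeight_comp_perm j i, Finset.sum_const, Finset.card_univ, nsmul_eq_mul]
    _ = ∫⁻ y, ∑ j, missedWeight w V α y j ∂Qι := (lintegral_finsetSum _ fun j _ => hmeas j).symm
    _ ≤ ∫⁻ y, ENNReal.ofReal α * ∑ j, ENNReal.ofReal (w (y j)) ∂Qι :=
        lintegral_mono (sum_missedWeight_le hw0 hα)
    _ = ENNReal.ofReal α * ∑ j, ∫⁻ y, ENNReal.ofReal (w (y j)) ∂Qι := by
        rw [lintegral_const_mul' _ _ ENNReal.ofReal_ne_top]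
        exact congrArg _ (lintegral_finsetSum _ fun j _ =>
          (hw.comp (measurable_pi_apply j)).ennreal_ofReal)
    _ = (Fintype.card ι : ℝ≥0∞) * ENNReal.ofReal α := by
        have hwj : ∀ j, ∫⁻ y, ENNReal.ofReal (w (y j)) ∂Qι = 1 := fun j =>
          ((measurePreserving_eval (fun _ => Q) j).lintegral_comp hw.ennreal_ofReal).trans hw1
        simp [hwj, mul_comm]

lemma ofReal_one_sub_le_withDensity_pi_setOf_le_weightedScoreQuantile (Q : Measure Z)
    [IsProbabilityMeasure Q] (hw : Measurable w) (hw0 : ∀ z, 0 ≤ w z)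
    (hw1 : ∫⁻ z, ENNReal.ofReal (w z) ∂Q = 1) (hV : Measurable V) (hα : 0 ≤ α) (i : ι) :
    ENNReal.ofReal (1 - α) ≤ ((Measure.pi fun _ : ι => Q).withDensity
      fun y => ENNReal.ofReal (w (y i)))
        {y | (V (y i) : EReal) ≤ weightedScoreQuantile w V α y} := by
  have : IsProbabilityMeasure ((Measure.pi fun _ : ι => Q).withDensity
      fun y => ENNReal.ofReal (w (y i))) := ⟨by
    rw [withDensity_apply _ .univ, Measure.restrict_univ,
      (measurePreserving_eval (fun _ => Q) i).lintegral_comp hw.ennreal_ofReal, hw1]⟩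
  have h := withDensity_pi_setOf_not_le_weightedScoreQuantile_le Q hw hw0 hw1 hV hα i
  rw [prob_compl_eq_one_sub (measurableSet_setOf_le_weightedScoreQuantile hw hw0 hV i),
    tsub_le_iff_right] at h
  rwa [ENNReal.ofReal_sub _ hα, ENNReal.ofReal_one, tsub_le_iff_left]

end WeightedScoreQuantile

section SplitLastCoordinate

variable {Z : Type*} [MeasurableSpace Z] {n : ℕ}

lemma map_piFinSuccAbove_last_eq_prod {Ω : Type*} [MeasurableSpace Ω] {μ : Measure Ω}
    [IsProbabilityMeasure μ] {X : Fin (n + 1) → Ω → Z} (hX : ∀ i, Measurable (X i))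
    (hindep : iIndepFun X μ) {Q P : Measure Z} (hQ : ∀ i : Fin n, μ.map (X i.castSucc) = Q)
    (hP : μ.map (X (Fin.last n)) = P) :
    (μ.map fun ω i => X i ω).map (MeasurableEquiv.piFinSuccAbove (fun _ => Z) (Fin.last n))
      = P.prod (Measure.pi fun _ : Fin n => Q) := by
  have : ∀ i, IsProbabilityMeasure (μ.map (X i)) := fun i =>
    Measure.isProbabilityMeasure_map (hX i).aemeasurable
  rw [hindep.map_fun_eq_pi_map fun i => (hX i).aemeasurable,
    (measurePreserving_piFinSuccAbove _ _).map_eq]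
  simp only [Fin.succAbove_last, hQ, hP]

lemma map_prod_withDensity_piFinSuccAbove_symm (Q : Measure Z) [SigmaFinite Q] {f : Z → ℝ≥0∞}
    (hf : Measurable f) (i : Fin (n + 1)) :
    ((Q.withDensity f).prod (Measure.pi fun _ : Fin n => Q)).map
        (MeasurableEquiv.piFinSuccAbove (fun _ => Z) i).symm
      = (Measure.pi fun _ => Q).withDensity fun y => f (y i) := by
  set e := MeasurableEquiv.piFinSuccAbove (fun _ : Fin (n + 1) => Z) i
  ext E hE
  rw [Measure.map_apply e.symm.measurable hE, prod_withDensity_left hf,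
    withDensity_apply _ (e.symm.measurable hE), withDensity_apply _ hE,
    ← (measurePreserving_piFinSuccAbove (fun _ => Q) i).map_eq,
    setLIntegral_map (f := fun p => f p.1) (e.symm.measurable hE) (by fun_prop)
      e.measurable]
  simp only [← Set.preimage_comp, MeasurableEquiv.symm_comp_self, Set.preimage_id]
  rfl

lemma ofReal_one_sub_le_prod_setOf_le_weightedScoreQuantile_add_tvDist (Q P : Measure Z)
    [IsProbabilityMeasure Q] [IsProbabilityMeasure P] {w V : Z → ℝ} (hw : Measurable w)
    (hw0 : ∀ z, 0 ≤ w z) (hw1 : ∫⁻ z, ENNReal.ofReal (w z) ∂Q = 1) (hV : Measurable V) {α : ℝ}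
    (hα : 0 ≤ α) :
    ENNReal.ofReal (1 - α) ≤ (P.prod (Measure.pi fun _ : Fin n => Q))
        ((MeasurableEquiv.piFinSuccAbove (fun _ => Z) (Fin.last n)).symm ⁻¹'
          {y | (V (y (Fin.last n)) : EReal) ≤ weightedScoreQuantile w V α y})
      + ENNReal.ofReal (tvDist (Q.withDensity fun z => ENNReal.ofReal (w z)) P) := by
  have : IsProbabilityMeasure (Q.withDensity fun z => ENNReal.ofReal (w z)) :=
    ⟨by rw [withDensity_apply _ .univ, Measure.restrict_univ, hw1]⟩
  have hE := measurableSet_setOf_le_weightedScoreQuantile hw hw0 hV (α := α) (Fin.last n)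
  refine le_trans ?_ (prod_apply_le_add_tvDist _ ((MeasurableEquiv.measurable _) hE))
  rw [← Measure.map_apply (MeasurableEquiv.measurable _) hE,
    map_prod_withDensity_piFinSuccAbove_symm Q hw.ennreal_ofReal]
  exact ofReal_one_sub_le_withDensity_pi_setOf_le_weightedScoreQuantile Q hw hw0 hw1 hV hα _

end SplitLastCoordinate

theorem weighted_conformal_coverage_imperfect_weights_general
    {Z : Type*} [MeasurableSpace Z] (Q P : Measure Z)
    [IsProbabilityMeasure Q] [IsProbabilityMeasure P]
    (w : Z → ℝ) (hwmeas : Measurable w) (hw0 : ∀ z, 0 ≤ w z)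
    (hwint : ∫ z, w z ∂Q = 1)
    {Ω : Type*} [MeasurableSpace Ω] (μ : Measure Ω) [IsProbabilityMeasure μ]
    (n : ℕ) (Zi : Fin (n + 1) → Ω → Z) (hZmeas : ∀ i, Measurable (Zi i))
    (hindep : iIndepFun Zi μ)
    (hlawQ : ∀ i : Fin n, Measure.map (Zi i.castSucc) μ = Q)
    (hlawP : Measure.map (Zi (Fin.last n)) μ = P)
    (V : Z → ℝ) (hV : Measurable V) (α : ℝ) (hα : α ∈ Set.Ioo (0 : ℝ) 1) :
    1 - α - tvDist (Q.withDensity (fun z => ENNReal.ofReal (w z))) P ≤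
      (μ {x | ((V (Zi (Fin.last n) x) : ℝ) : EReal) ≤
        wQuantile (1 - α)
          (fun i : Fin (n + 1) => w (Zi i x) / ∑ j : Fin (n + 1), w (Zi j x))
          (fun i : Fin (n + 1) =>
            if (i : ℕ) < n then ((V (Zi i x) : ℝ) : EReal) else (⊤ : EReal))}).toReal := by
  have hw1 : ∫⁻ z, ENNReal.ofReal (w z) ∂Q = 1 := by
    rw [← ofReal_integral_eq_lintegral_ofReal (.of_integral_ne_zero (by simp [hwint]))
      (.of_forall hw0), hwint, ENNReal.ofReal_one]
  set e := MeasurableEquiv.piFinSuccAbove (fun _ : Fin (n + 1) => Z) (Fin.last n)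
  set S := e.symm ⁻¹' {y | (V (y (Fin.last n)) : EReal) ≤ weightedScoreQuantile w V α y}
  have hS : MeasurableSet S :=
    e.symm.measurable (measurableSet_setOf_le_weightedScoreQuantile hwmeas hw0 hV _)
  have hcov := ofReal_one_sub_le_prod_setOf_le_weightedScoreQuantile_add_tvDist (n := n) Q P
    hwmeas hw0 hw1 hV hα.1.le
  rw [ENNReal.ofReal_le_iff_le_toReal (by finiteness), ENNReal.toReal_add (by finiteness)
    ENNReal.ofReal_ne_top, ENNReal.toReal_ofReal tvDist_nonneg] at hcov
  calc 1 - α - tvDist _ P ≤ ((P.prod (Measure.pi fun _ : Fin n => Q)) S).toReal := by linarith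
    _ = _ := by
      rw [← map_piFinSuccAbove_last_eq_prod hZmeas hindep hlawQ hlawP,
        Measure.map_apply e.measurable hS,
        Measure.map_apply (measurable_pi_lambda _ hZmeas) (e.measurable hS)]
      congr 2
      ext x
      simp only [S, Set.mem_preimage, MeasurableEquiv.symm_apply_apply, Set.mem_ofPred_eq]
      exact (coe_le_wQuantile_ite_top_iff hw0 fun i => Zi i x).symm

/-- Weighted conformal prediction with an arbitrary normalized weight
function `ω̃` (with `∫ ω̃ dQ = 1`): letting `P̃` be the measure with density `ω̃` w.r.t. `Q`,
the coverage of the weighted split quantile is at least `1 - α - d_TV(P̃, P)`. -/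
theorem weighted_conformal_coverage_imperfect_weights
    {Z : Type*} [MeasurableSpace Z] (Q P : Measure Z)
    [IsProbabilityMeasure Q] [IsProbabilityMeasure P]
    (w : Z → ℝ) (hwmeas : Measurable w) (hw0 : ∀ z, 0 ≤ w z)
    (hwint : ∫ z, w z ∂Q = 1)
    {Ω : Type*} [MeasurableSpace Ω] (μ : Measure Ω) [IsProbabilityMeasure μ]
    (n : ℕ) (hn : 1 ≤ n) (Zi : Fin (n + 1) → Ω → Z) (hZmeas : ∀ i, Measurable (Zi i))
    (hindep : iIndepFun Zi μ)
    (hlawQ : ∀ i : Fin n, Measure.map (Zi i.castSucc) μ = Q)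
    (hlawP : Measure.map (Zi (Fin.last n)) μ = P)
    (V : Z → ℝ) (hV : Measurable V) (α : ℝ) (hα : α ∈ Set.Ioo (0 : ℝ) 1) :
    1 - α - tvDist (Q.withDensity (fun z => ENNReal.ofReal (w z))) P ≤
      (μ {x | ((V (Zi (Fin.last n) x) : ℝ) : EReal) ≤
        wQuantile (1 - α)
          (fun i : Fin (n + 1) => w (Zi i x) / ∑ j : Fin (n + 1), w (Zi j x))
          (fun i : Fin (n + 1) =>
            if (i : ℕ) < n then ((V (Zi i x) : ℝ) : EReal) else (⊤ : EReal))}).toReal :=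
  weighted_conformal_coverage_imperfect_weights_general Q P w hwmeas hw0 hwint μ n Zi hZmeas hindep
    hlawQ hlawP V hV α hα
end
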